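/- Let 0 ≤ m < L and suppose the matrices A(s) of a matrix product state are in right canonical form for every s = m+1,…,L. For each β = 1,…,r(m+1) define the state θ^β ∈ (ℂ²)^{⊗(L−m)} with amplitudes ⟨y|θ^β⟩ = (e^β)ᵀ A_{y_1}(m+1) A_{y_2}(m+2) ⋯ A_{y_{L−m}}(L) for y ∈ {0,1}^{L−m}, where e^β is the β-th standard basis column vector of length r(m+1). Then the states θ^1,…,θ^{r(m+1)} form an orthonormal family: ⟨θ^β, θ^α⟩ = δ_{α,β} for all 1 ≤ α, β ≤ r(m+1). -/
import Mathlib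


open Matrix

/-- A matrix product state on a chain of `L` qubits: bond dimensions `D 0, D 1, …, D L`
(so the 1-based site `s` carries matrices of size `r(s) × c(s) = D (s-1) × D s`), with
`D 0 = 1` and `D L = 1`, and matrices `A s x : Matrix (Fin (D s)) (Fin (D (s+1))) ℂ` for the
(0-based) site `s` and physical index `x ∈ {0,1}`. -/
structure MPS (L : ℕ) where
  D : ℕ → ℕ
  A : (s : ℕ) → Fin 2 → Matrix (Fin (D s)) (Fin (D (s + 1))) ℂ
  D_zero : D 0 = 1
  D_last : D L = 1

/-- Partial product `A_{x_s}(s) A_{x_{s+1}}(s+1) ⋯ A_{x_{s+n-1}}(s+n-1)` (0-based sites). -/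
noncomputable def MPS.chunk {L : ℕ} (m : MPS L) (x : ℕ → Fin 2) (s : ℕ) :
    (n : ℕ) → Matrix (Fin (m.D s)) (Fin (m.D (s + n))) ℂ
  | 0 => (1 : Matrix (Fin (m.D s)) (Fin (m.D s)) ℂ)
  | n + 1 => MPS.chunk m x s n * m.A (s + n) (x (s + n))

/-- The product of the first `n` matrices, `A_{x_0}(0) ⋯ A_{x_{n-1}}(n-1)`. -/
noncomputable def MPS.pref {L : ℕ} (m : MPS L) (x : ℕ → Fin 2) :
    (n : ℕ) → Matrix (Fin (m.D 0)) (Fin (m.D n)) ℂ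
  | 0 => 1
  | n + 1 => MPS.pref m x n * m.A n (x n)

/-- Extension of a tuple `x ∈ {0,1}^n` to a function `ℕ → Fin 2` (by zero). -/
def extendTup {n : ℕ} (x : Fin n → Fin 2) : ℕ → Fin 2 :=
  fun k => if h : k < n then x ⟨k, h⟩ else 0

/-- Extension of a tuple `y ∈ {0,1}^n` to a function `ℕ → Fin 2` placing `y` at positions
`m, m+1, …, m+n-1`. -/
def extendTupFrom (m : ℕ) {n : ℕ} (y : Fin n → Fin 2) : ℕ → Fin 2 :=
  fun k => if h : k - m < n then y ⟨k - m, h⟩ else 0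

/-- The state `ψ(A) ∈ (ℂ²)^{⊗L}` of a matrix product state: its amplitudes are the `1 × 1`
matrix products `⟨x|ψ(A)⟩ = A_{x_1}(1) A_{x_2}(2) ⋯ A_{x_L}(L)`. -/
noncomputable def MPS.state {L : ℕ} (m : MPS L) : (Fin L → Fin 2) → ℂ :=
  fun x =>
    m.pref (extendTup x) L ⟨0, by rw [m.D_zero]; exact Nat.one_pos⟩
      ⟨0, by rw [m.D_last]; exact Nat.one_pos⟩

/-- Left canonical form at (0-based) site `s`: `A_0(s)† A_0(s) + A_1(s)† A_1(s) = I`. -/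
def MPS.LCF {L : ℕ} (m : MPS L) (s : ℕ) : Prop :=
  (m.A s 0)ᴴ * m.A s 0 + (m.A s 1)ᴴ * m.A s 1 = 1

/-- Right canonical form at (0-based) site `s`: `A_0(s) A_0(s)† + A_1(s) A_1(s)† = I`. -/
def MPS.RCF {L : ℕ} (m : MPS L) (s : ℕ) : Prop :=
  m.A s 0 * (m.A s 0)ᴴ + m.A s 1 * (m.A s 1)ᴴ = 1

/-- The state `φ^α ∈ (ℂ²)^{⊗n}` with amplitudes
`⟨x|φ^α⟩ = A_{x_1}(1) ⋯ A_{x_n}(n) e^α` (the first `n` sites, column `α`). -/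
noncomputable def MPS.phi {L : ℕ} (m : MPS L) (n : ℕ) (α : Fin (m.D n)) :
    (Fin n → Fin 2) → ℂ :=
  fun x => m.pref (extendTup x) n ⟨0, by rw [m.D_zero]; exact Nat.one_pos⟩ α

/-- The state `θ^β ∈ (ℂ²)^{⊗(L−s)}` with amplitudes
`⟨y|θ^β⟩ = (e^β)ᵀ A_{y_1}(s+1) ⋯ A_{y_{L−s}}(L)` (the last `L − s` sites, row `β`;
here `s` is 0-based, i.e. sites `s, s+1, …, L-1` in 0-based counting). -/
noncomputable def MPS.theta {L : ℕ} (m : MPS L) (s : ℕ) (hs : s ≤ L) (β : Fin (m.D s)) :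
    (Fin (L - s) → Fin 2) → ℂ :=
  fun y =>
    m.chunk (extendTupFrom s y) s (L - s) β
      ⟨0, by rw [Nat.add_sub_cancel' hs, m.D_last]; exact Nat.one_pos⟩

lemma MPS.chunk_congr {L : ℕ} (A : MPS L) (x x' : ℕ → Fin 2) (s : ℕ) :
    ∀ n, (∀ k, s ≤ k → k < s + n → x k = x' k) → A.chunk x s n = A.chunk x' s n := by
  intro n
  induction n with
  | zero => intro _; rfl
  | succ n ih =>
    intro h
    show A.chunk x s n * A.A (s + n) (x (s + n)) = A.chunk x' s n * A.A (s + n) (x' (s + n))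
    rw [ih (fun k hk hk' => h k hk (by omega)), h (s + n) (by omega) (by omega)]

lemma MPS.chunk_sum {L : ℕ} (A : MPS L) :
    ∀ (n s : ℕ), (∀ t, s ≤ t → t < s + n → A.RCF t) →
      ∑ y : Fin n → Fin 2,
        A.chunk (extendTupFrom s y) s n * (A.chunk (extendTupFrom s y) s n)ᴴ = 1 := by
  intro n
  induction n with
  | zero =>
    intro s _
    simp [MPS.chunk]
  | succ n ih =>
    intro s hR
    rw [← (Fin.snocEquiv (fun _ : Fin (n + 1) => Fin 2)).sum_comp]
    have key : ∀ (p : Fin 2 × (Fin n → Fin 2)),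
        A.chunk (extendTupFrom s (Fin.snocEquiv (fun _ => Fin 2) p)) s (n + 1)
          = A.chunk (extendTupFrom s p.2) s n * A.A (s + n) p.1 := by
      intro ⟨b, y⟩
      show A.chunk (extendTupFrom s (Fin.snoc y b)) s n *
          A.A (s + n) (extendTupFrom s (Fin.snoc y b) (s + n))
        = A.chunk (extendTupFrom s y) s n * A.A (s + n) b
      have h1 : A.chunk (extendTupFrom s (Fin.snoc y b)) s n
          = A.chunk (extendTupFrom s y) s n := by
        apply A.chunk_congr
        intro k hk hk'
        unfold extendTupFrom
        have hkn : k - s < n := by omega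
        rw [dif_pos (by omega : k - s < n + 1), dif_pos hkn]
        have : (⟨k - s, by omega⟩ : Fin (n + 1)) = Fin.castSucc ⟨k - s, hkn⟩ := rfl
        rw [this, Fin.snoc_castSucc]
      have h2 : extendTupFrom s (Fin.snoc y b) (s + n) = b := by
        unfold extendTupFrom
        rw [dif_pos (by omega : s + n - s < n + 1)]
        have : (⟨s + n - s, by omega⟩ : Fin (n + 1)) = Fin.last n := by
          ext; simp
        rw [this, Fin.snoc_last]
      rw [h1, h2]
    rw [Finset.sum_congr rfl (fun p _ => by rw [key p])]
    rw [Fintype.sum_prod_type_right]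
    have step : ∀ y : Fin n → Fin 2,
        (∑ b : Fin 2, (A.chunk (extendTupFrom s y) s n * A.A (s + n) b) *
          (A.chunk (extendTupFrom s y) s n * A.A (s + n) b)ᴴ)
        = A.chunk (extendTupFrom s y) s n * (A.chunk (extendTupFrom s y) s n)ᴴ := by
      intro y
      have hr : A.RCF (s + n) := hR (s + n) (by omega) (by omega)
      unfold MPS.RCF at hr
      simp only [conjTranspose_mul]
      rw [Fin.sum_univ_two]
      set M := A.chunk (extendTupFrom s y) s n
      simp only [Matrix.mul_assoc]
      rw [← Matrix.mul_add]
      simp only [← Matrix.mul_assoc]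
      rw [← Matrix.add_mul, hr, Matrix.one_mul]
    rw [Finset.sum_congr rfl (fun y _ => step y)]
    exact ih s (fun t ht ht' => hR t ht (by omega))

/-- If the matrices of a matrix product state are in right canonical form
at the (1-based) sites `m+1,…,L` (0-based sites `m,…,L−1`), then the states `θ^β` (for
`β = 1,…,r(m+1)`) with amplitudes `⟨y|θ^β⟩ = (e^β)ᵀ A_{y_1}(m+1) ⋯ A_{y_{L−m}}(L)` form an
orthonormal family. -/
theorem theta_orthonormal_of_RCF (L : ℕ) (A : MPS L) (m : ℕ) (hmL : m < L)
    (hRCF : ∀ s, m ≤ s → s < L → A.RCF s) (α β : Fin (A.D m)) :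
    ∑ y : Fin (L - m) → Fin 2,
        star (A.theta m (le_of_lt hmL) β y) * A.theta m (le_of_lt hmL) α y =
      if α = β then 1 else 0 := by
  have hL : m + (L - m) = 1 * L := by omega
  have hcard : Fintype.card (Fin (A.D (m + (L - m)))) = 1 := by
    simp [Nat.add_sub_cancel' hmL.le, A.D_last]
  have hsum := A.chunk_sum (L - m) m (fun t ht ht' => hRCF t ht (by omega))
  have key : ∀ y : Fin (L - m) → Fin 2,
      star (A.theta m (le_of_lt hmL) β y) * A.theta m (le_of_lt hmL) α y
        = (A.chunk (extendTupFrom m y) m (L - m) *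
            (A.chunk (extendTupFrom m y) m (L - m))ᴴ) α β := by
    intro y
    rw [Matrix.mul_apply]
    set j0 : Fin (A.D (m + (L - m))) :=
      ⟨0, by rw [Nat.add_sub_cancel' hmL.le, A.D_last]; exact Nat.one_pos⟩
    have : ∀ j : Fin (A.D (m + (L - m))), j = j0 := by
      intro j
      have := Fintype.card_le_one_iff.mp (le_of_eq hcard)
      exact this j j0
    rw [Fintype.sum_eq_single j0 (fun j hj => absurd (this j) hj)]
    show star (A.theta m (le_of_lt hmL) β y) * A.theta m (le_of_lt hmL) α y
        = A.chunk (extendTupFrom m y) m (L - m) α j0 *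
          (A.chunk (extendTupFrom m y) m (L - m))ᴴ j0 β
    rw [Matrix.conjTranspose_apply]
    show star (A.chunk (extendTupFrom m y) m (L - m) β j0) *
        A.chunk (extendTupFrom m y) m (L - m) α j0 = _
    ring
  rw [Finset.sum_congr rfl (fun y _ => key y), ← Matrix.sum_apply, hsum,
    Matrix.one_apply]
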